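/- Let C be a ℤ₄-linear code of length n. The theta series of the Construction A₄ lattice Λ_{A₄}(C) = ½(C + 4ℤⁿ) equals the symmetrized weight enumerator of C evaluated at theta functions: Θ_{Λ_{A₄}(C)}(z) = swe_C(ϑ₃(4z), ϑ₂(z)/2, ϑ₂(4z)). -/
import Mathlib

open Complex in
/-- Jacobi theta function `ϑ₂`. -/
noncomputable def θ₂ (z : ℂ) : ℂ := ∑' m : ℤ, Complex.exp (Real.pi * I * z * ((m : ℂ) + 1/2)^2)

open Complex in
/-- Jacobi theta function `ϑ₃`. -/
noncomputable def θ₃ (z : ℂ) : ℂ := ∑' m : ℤ, Complex.exp (Real.pi * I * z * (m : ℂ)^2)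

open Complex in
/-- Jacobi theta function `ϑ₄`. -/
noncomputable def θ₄ (z : ℂ) : ℂ := ∑' m : ℤ, (-1)^m * Complex.exp (Real.pi * I * z * (m : ℂ)^2)

/-- `nI i c` counts coordinates of `c` equal to `i`. -/
def nI {n : ℕ} (i : ZMod 4) (c : Fin n → ZMod 4) : ℕ :=
  (Finset.univ.filter (fun k => c k = i)).card

open Classical in
/-- Symmetrized weight enumerator of a `ℤ₄`-code (complex variables). -/
noncomputable def sweC {n : ℕ} (C : Set (Fin n → ZMod 4)) (a b c : ℂ) : ℂ :=
  ∑ u ∈ Finset.univ.filter (· ∈ C), a ^ nI 0 u * b ^ (nI 1 u + nI 3 u) * c ^ nI 2 u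

/-- The Construction `A₄` lattice `½(C + 4ℤⁿ) ⊆ ℝⁿ`. -/
def latA4 {n : ℕ} (C : Set (Fin n → ZMod 4)) : Set (Fin n → ℝ) :=
  {x | ∃ c ∈ C, ∃ v : Fin n → ℤ, x = fun k => (((c k).val : ℝ) + 4 * (v k : ℝ)) / 2}

open Complex in
/-- Theta series of a subset of `ℝⁿ`. -/
noncomputable def ΘL {n : ℕ} (Λ : Set (Fin n → ℝ)) (z : ℂ) : ℂ :=
  ∑' l : Λ, Complex.exp (Real.pi * I * z * ((∑ k, ((l : Fin n → ℝ) k)^2 : ℝ) : ℂ))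

section Aux
open Complex

/-- The one-coordinate Gaussian sum term. -/
noncomputable def gterm (z : ℂ) (a : ZMod 4) (m : ℤ) : ℂ :=
  Complex.exp (Real.pi * I * z * (((a.val : ℂ) + 4*(m:ℂ))/2)^2)

lemma gterm_summable {z : ℂ} (hz : 0 < z.im) (a : ZMod 4) : Summable (gterm z a) := by
  have h4 : 0 < (4*z).im := by
    rw [Complex.mul_im]; simp; linarith
  have h := ((summable_jacobiTheta₂_term_iff ((a.val : ℂ) * z) (4*z)).mpr h4).mul_left
    (Complex.exp (Real.pi * I * z * (a.val:ℂ)^2/4))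
  refine h.congr fun m => ?_
  rw [jacobiTheta₂_term, ← Complex.exp_add, gterm]
  congr 1
  ring

lemma gterm_norm_summable {z : ℂ} (hz : 0 < z.im) (a : ZMod 4) :
    Summable fun m => ‖gterm z a m‖ := (gterm_summable hz a).norm

lemma prod_tsum_aux {n : ℕ} (h : Fin n → ℤ → ℂ) (hs : ∀ k, Summable fun m => ‖h k m‖) :
    Summable (fun v : Fin n → ℤ => ‖∏ k, h k (v k)‖) ∧
    ∑' v : Fin n → ℤ, ∏ k, h k (v k) = ∏ k, ∑' m, h k m := by
  induction n with
  | zero =>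
    constructor
    · exact Summable.of_finite
    · rw [tsum_eq_single (fun _ => 0) (fun b hb => absurd (Subsingleton.elim b _) hb)]
      simp
  | succ n ih =>
    obtain ⟨ihS, ihT⟩ := ih (fun k => h k.succ) (fun k => hs k.succ)
    set e := Fin.consEquiv (fun _ : Fin (n+1) => ℤ) with he
    have key : ∀ p : ℤ × (Fin n → ℤ), ∏ k, h k (e p k)
        = h 0 p.1 * ∏ k : Fin n, h k.succ (p.2 k) := by
      intro p
      rw [Fin.prod_univ_succ]
      simp [he, Fin.consEquiv]
    have hmul : Summable fun p : ℤ × (Fin n → ℤ) =>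
        ‖h 0 p.1 * ∏ k : Fin n, h k.succ (p.2 k)‖ := by
      refine (summable_prod_of_nonneg (fun p => norm_nonneg _)).mpr ⟨?_, ?_⟩
      · intro x
        simpa [norm_mul] using ihS.mul_left ‖h 0 x‖
      · refine Summable.congr
          (((hs 0).mul_right (∑' v : Fin n → ℤ, ‖∏ k : Fin n, h k.succ (v k)‖))) ?_
        intro x
        simp [norm_mul, tsum_mul_left]
    constructor
    · rw [← e.summable_iff]
      exact hmul.congr fun p => by rw [Function.comp_apply, key]
    · rw [← e.tsum_eq, tsum_congr key,
        ← tsum_mul_tsum_of_summable_norm (hs 0) ihS, ihT, Fin.prod_univ_succ]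

lemma Sval0 (z : ℂ) : ∑' m, gterm z 0 m = θ₃ (4*z) := by
  show _ = ∑' m : ℤ, Complex.exp (Real.pi * I * (4*z) * (m : ℂ)^2)
  refine tsum_congr fun m => ?_
  rw [gterm]
  congr 1
  have h0 : ((0:ZMod 4)).val = 0 := rfl
  rw [h0]
  push_cast
  ring

lemma Sval2 (z : ℂ) : ∑' m, gterm z 2 m = θ₂ (4*z) := by
  show _ = ∑' m : ℤ, Complex.exp (Real.pi * I * (4*z) * ((m : ℂ) + 1/2)^2)
  refine tsum_congr fun m => ?_
  rw [gterm]
  congr 1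
  have h2 : ((2:ZMod 4)).val = 2 := rfl
  rw [h2]
  push_cast
  ring

lemma Sval31 (z : ℂ) : ∑' m, gterm z 3 m = ∑' m, gterm z 1 m := by
  rw [← (Equiv.subLeft (-1 : ℤ)).tsum_eq (gterm z 3)]
  refine tsum_congr fun m => ?_
  rw [gterm, gterm]
  congr 1
  have h3 : ((3:ZMod 4)).val = 3 := rfl
  have h1 : ((1:ZMod 4)).val = 1 := rfl
  rw [h3, h1]
  simp only [Equiv.subLeft_apply]
  push_cast
  ring

lemma Sval1 {z : ℂ} (hz : 0 < z.im) : ∑' m, gterm z 1 m = θ₂ z / 2 := by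
  have he : HasSum (fun m : ℤ => if m % 2 = 0
      then Complex.exp (Real.pi * I * z * ((m : ℂ) + 1/2)^2) else 0) (∑' m, gterm z 1 m) := by
    have hinj : Function.Injective (fun j : ℤ => 2*j) := fun a b hab => by dsimp at hab; omega
    refine (Function.Injective.hasSum_iff hinj ?_).mp ?_
    · intro x hx
      rw [if_neg]
      intro hc
      exact hx ⟨x/2, show 2*(x/2) = x by omega⟩
    · have hcomp : ((fun m : ℤ => if m % 2 = 0
          then Complex.exp (Real.pi * I * z * ((m : ℂ) + 1/2)^2) else 0)
            ∘ fun j : ℤ => 2*j) = gterm z 1 := by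
        funext j
        simp only [Function.comp_apply]
        rw [if_pos (Int.mul_emod_right 2 j), gterm]
        congr 1
        have h1 : ((1:ZMod 4)).val = 1 := rfl
        rw [h1]
        push_cast
        ring
      rw [hcomp]
      exact (gterm_summable hz 1).hasSum
  have ho : HasSum (fun m : ℤ => if m % 2 = 0
      then 0 else Complex.exp (Real.pi * I * z * ((m : ℂ) + 1/2)^2)) (∑' m, gterm z 3 m) := by
    have hinj : Function.Injective (fun j : ℤ => 2*j+1) := fun a b hab => by dsimp at hab; omega
    refine (Function.Injective.hasSum_iff hinj ?_).mp ?_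
    · intro x hx
      rw [if_pos]
      by_contra hc
      exact hx ⟨(x-1)/2, show 2*((x-1)/2)+1 = x by omega⟩
    · have hcomp : ((fun m : ℤ => if m % 2 = 0
          then 0 else Complex.exp (Real.pi * I * z * ((m : ℂ) + 1/2)^2))
            ∘ fun j : ℤ => 2*j+1) = gterm z 3 := by
        funext j
        simp only [Function.comp_apply]
        rw [if_neg (by omega : ¬ (2*j+1) % 2 = 0), gterm]
        congr 1
        have h3 : ((3:ZMod 4)).val = 3 := rfl
        rw [h3]
        push_cast
        ring
      rw [hcomp]
      exact (gterm_summable hz 3).hasSum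
  have hsum := he.add ho
  have hfs : (fun m : ℤ => (if m % 2 = 0
      then Complex.exp (Real.pi * I * z * ((m : ℂ) + 1/2)^2) else 0) + if m % 2 = 0
      then 0 else Complex.exp (Real.pi * I * z * ((m : ℂ) + 1/2)^2))
      = fun m : ℤ => Complex.exp (Real.pi * I * z * ((m : ℂ) + 1/2)^2) := by
    funext m
    by_cases h : m % 2 = 0 <;> simp [h]
  rw [hfs] at hsum
  have hθ : θ₂ z = ∑' m, gterm z 1 m + ∑' m, gterm z 3 m := hsum.tsum_eq
  rw [Sval31 z] at hθ
  rw [hθ]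
  ring

end Aux

open Complex in
theorem theta_constructionA4 {n : ℕ} (C : AddSubgroup (Fin n → ZMod 4)) :
    ∀ z : ℂ, 0 < z.im →
      ΘL (latA4 (C : Set (Fin n → ZMod 4))) z =
        sweC (C : Set (Fin n → ZMod 4)) (θ₃ (4*z)) (θ₂ z / 2) (θ₂ (4*z)) := by
  classical
  intro z hz
  set Cs : Set (Fin n → ZMod 4) := (C : Set (Fin n → ZMod 4)) with hCs
  haveI : Fintype ↥Cs := Fintype.ofFinite _
  -- the parametrization
  have Tmem : ∀ p : ↥Cs × (Fin n → ℤ),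
      (fun k => (((p.1.1 k).val : ℝ) + 4 * (p.2 k : ℝ)) / 2) ∈ latA4 Cs :=
    fun p => ⟨p.1.1, p.1.2, p.2, rfl⟩
  set T : ↥Cs × (Fin n → ℤ) → ↥(latA4 Cs) := fun p => ⟨_, Tmem p⟩ with hT
  have Tinj : Function.Injective T := by
    rintro ⟨⟨c, hc⟩, v⟩ ⟨⟨c', hc'⟩, v'⟩ h
    have h2 : ∀ k, (((c k).val : ℝ) + 4 * (v k : ℝ)) / 2
        = (((c' k).val : ℝ) + 4 * (v' k : ℝ)) / 2 :=
      fun k => congrFun (congrArg Subtype.val h) k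
    have key : ∀ k, c k = c' k ∧ v k = v' k := by
      intro k
      have h3 := h2 k
      have hint : ((c k).val : ℤ) + 4 * v k = ((c' k).val : ℤ) + 4 * v' k := by
        have : (((c k).val : ℝ) + 4 * (v k:ℝ)) = ((c' k).val : ℝ) + 4 * (v' k:ℝ) := by
          linarith
        exact_mod_cast this
      have hv1 : (c k).val < 4 := ZMod.val_lt _
      have hv2 : (c' k).val < 4 := ZMod.val_lt _
      have hval : (c k).val = (c' k).val := by omega
      exact ⟨ZMod.val_injective 4 hval, by omega⟩
    have hc12 : c = c' := funext fun k => (key k).1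
    subst hc12
    have hv12 : v = v' := funext fun k => (key k).2
    subst hv12
    rfl
  have Tsurj : Function.Surjective T := by
    rintro ⟨x, c, hc, v, rfl⟩
    exact ⟨⟨⟨c, hc⟩, v⟩, rfl⟩
  set E : (↥Cs × (Fin n → ℤ)) ≃ ↥(latA4 Cs) := Equiv.ofBijective T ⟨Tinj, Tsurj⟩ with hE
  -- rewrite the theta series
  have step1 : ΘL (latA4 Cs) z = ∑' p : ↥Cs × (Fin n → ℤ), ∏ k, gterm z (p.1.1 k) (p.2 k) := by
    show (∑' l : ↥(latA4 Cs),
        Complex.exp (Real.pi * I * z * ((∑ k, ((l : Fin n → ℝ) k)^2 : ℝ) : ℂ))) = _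
    rw [← E.tsum_eq]
    refine tsum_congr fun p => ?_
    show Complex.exp (Real.pi * I * z *
      ((∑ k, ((((p.1.1 k).val : ℝ) + 4 * (p.2 k : ℝ)) / 2)^2 : ℝ) : ℂ)) = _
    push_cast
    rw [Finset.mul_sum, Complex.exp_sum]
    refine Finset.prod_congr rfl fun k _ => ?_
    rw [gterm]
  -- summability
  have hslice : ∀ c : ↥Cs, Summable fun v : Fin n → ℤ => ‖∏ k, gterm z (c.1 k) (v k)‖ :=
    fun c => (prod_tsum_aux (fun k => gterm z (c.1 k)) (fun k => gterm_norm_summable hz _)).1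
  have hFnorm : Summable fun p : ↥Cs × (Fin n → ℤ) => ‖∏ k, gterm z (p.1.1 k) (p.2 k)‖ :=
    (summable_prod_of_nonneg (fun _ => norm_nonneg _)).mpr ⟨hslice, Summable.of_finite⟩
  have hF : Summable fun p : ↥Cs × (Fin n → ℤ) => ∏ k, gterm z (p.1.1 k) (p.2 k) :=
    hFnorm.of_norm
  rw [step1, Summable.tsum_prod' hF (fun c => (hslice c).of_norm)]
  rw [tsum_congr (fun c : ↥Cs =>
    (prod_tsum_aux (fun k => gterm z (c.1 k)) (fun k => gterm_norm_summable hz _)).2)]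
  rw [tsum_fintype]
  -- fiberwise rewrite of each product
  have fib : ∀ u : Fin n → ZMod 4, (∏ k, ∑' m, gterm z (u k) m) =
      (θ₃ (4*z)) ^ (nI 0 u) * (θ₂ z / 2) ^ (nI 1 u + nI 3 u) * (θ₂ (4*z)) ^ (nI 2 u) := by
    intro u
    rw [← Finset.prod_fiberwise_of_maps_to (fun k _ => Finset.mem_univ (u k))
      (fun k => ∑' m, gterm z (u k) m)]
    have hfilter : ∀ j : ZMod 4,
        (∏ k ∈ Finset.univ.filter (fun k => u k = j), ∑' m, gterm z (u k) m)
        = (∑' m, gterm z j m) ^ (nI j u) := by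
      intro j
      rw [Finset.prod_congr rfl (fun k hk => by rw [(Finset.mem_filter.mp hk).2]),
        Finset.prod_const]
      rfl
    refine Eq.trans (Finset.prod_congr rfl fun j _ => hfilter j) ?_
    have huniv : (Finset.univ : Finset (ZMod 4)) = {0, 1, 2, 3} := by decide
    rw [huniv, Finset.prod_insert (by decide), Finset.prod_insert (by decide),
      Finset.prod_insert (by decide), Finset.prod_singleton]
    rw [Sval0, Sval1 hz, Sval2, Sval31, Sval1 hz, pow_add]
    ring
  rw [Finset.sum_congr rfl (fun c _ => fib c.1)]
  -- identify with the weight enumerator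
  show _ = ∑ u ∈ Finset.univ.filter (· ∈ Cs),
      (θ₃ (4*z)) ^ (nI 0 u) * (θ₂ z / 2) ^ (nI 1 u + nI 3 u) * (θ₂ (4*z)) ^ (nI 2 u)
  exact (Finset.sum_subtype (p := (· ∈ Cs)) _ (fun u => by simp) (fun u =>
    (θ₃ (4*z)) ^ (nI 0 u) * (θ₂ z / 2) ^ (nI 1 u + nI 3 u) * (θ₂ (4*z)) ^ (nI 2 u))).symm
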